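/- arXiv:1712.04800 — 2 statements merged into one kernel-verified Lean document; each statement's English description precedes it below -/
import Mathlib

section
/- (Pappus–Pascal theorem.) Let K be a field. Let ℓ and ℓ' be distinct lines of ℙ²(K), let A, B, C be three distinct points on ℓ and A', B', C' three distinct points on ℓ', none of the six points being the intersection point of ℓ and ℓ'. Let C'' be the point on both lines AB' and A'B, B'' the point on both lines AC' and A'C, and A'' the point on both lines BC' and B'C. Then A'', B'', C'' are collinear. -/
open Submodule Module

section Helpers

variable {K : Type*} [Field K]

local notation "V3" => Fin 3 → K

lemma finrank_span_pair' {x y : V3} (h : LinearIndependent K ![x, y]) :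
    finrank K ↥(span K ({x, y} : Set V3)) = 2 := by
  have h1 : ({x, y} : Set V3) = Set.range ![x, y] := by
    ext z; simp [Matrix.range_cons, Matrix.range_empty, or_comm]
  rw [h1, finrank_span_eq_card h]
  simp

lemma eq_span_of_mem {B : Submodule K V3} {v : V3} (hB : finrank K B = 1)
    (hv : v ∈ B) (hv0 : v ≠ 0) : B = span K {v} := by
  refine (eq_of_le_of_finrank_le ((span_le).mpr (by simpa using hv)) ?_).symm
  rw [hB, finrank_span_singleton hv0]

lemma finrank_sup_two {X Y : Submodule K V3} (hX : finrank K X = 1)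
    (hY : finrank K Y = 1) (hXY : X ≠ Y) : finrank K ↥(X ⊔ Y) = 2 := by
  have hinf : finrank K ↥(X ⊓ Y) = 0 := by
    by_contra h
    have h1 : finrank K ↥(X ⊓ Y) ≤ 1 := hX ▸ finrank_mono inf_le_left
    have h2 : finrank K ↥(X ⊓ Y) = 1 := by omega
    have : X ⊓ Y = X := eq_of_le_of_finrank_le inf_le_left (by omega)
    have hXY' : X ≤ Y := by rw [← this]; exact inf_le_right
    exact hXY (eq_of_le_of_finrank_le hXY' (by omega))
  have := Submodule.finrank_sup_add_finrank_inf_eq X Y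
  omega

lemma cross_ne {l l' X Y' : Submodule K V3} (hX : finrank K X = 1)
    (hXl : X ≤ l) (hY'l' : Y' ≤ l') (hXi : X ≠ l ⊓ l')
    (hO1 : finrank K ↥(l ⊓ l') = 1) : X ≠ Y' := fun h =>
  hXi (eq_of_le_of_finrank_le (le_inf hXl (h ▸ hY'l')) (by omega))

lemma point_eq {P Q R : Submodule K V3} {v : V3} (hP : finrank K P = 2)
    (hQ : finrank K Q = 2) (hPQ : P ≠ Q) (hR : finrank K R = 1)
    (hRP : R ≤ P) (hRQ : R ≤ Q) (hv0 : v ≠ 0) (hvP : v ∈ P) (hvQ : v ∈ Q) :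
    R = span K {v} := by
  have hlt : P < P ⊔ Q := lt_of_le_of_ne le_sup_left (fun h => hPQ
    (eq_of_le_of_finrank_le (le_sup_right.trans h.ge : Q ≤ P) (by omega)).symm)
  have h3 : 2 < finrank K ↥(P ⊔ Q) := hP ▸ finrank_lt_finrank_of_lt hlt
  have hsum := Submodule.finrank_sup_add_finrank_inf_eq P Q
  have hinf : finrank K ↥(P ⊓ Q) ≤ 1 := by omega
  have hR' : R = P ⊓ Q := eq_of_le_of_finrank_le (le_inf hRP hRQ) (by omega)
  have hv' : span K {v} = P ⊓ Q :=
    eq_of_le_of_finrank_le ((span_le).mpr (by simp [Set.singleton_subset_iff, hvP, hvQ]))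
      (by rw [finrank_span_singleton hv0]; omega)
  rw [hR', ← hv']

lemma planes_ne {l l' X Y X' Y' : Submodule K V3}
    (hsup3 : finrank K ↥(l ⊔ l') = 3)
    (hX : finrank K X = 1) (hY : finrank K Y = 1)
    (hX' : finrank K X' = 1) (hY' : finrank K Y' = 1)
    (hXl : X ≤ l) (hYl : Y ≤ l) (hX'l' : X' ≤ l') (hY'l' : Y' ≤ l')
    (hXY : X ≠ Y) (hX'Y' : X' ≠ Y')
    (hl : finrank K l = 2) (hl' : finrank K l' = 2) :
    X ⊔ Y' ≠ X' ⊔ Y := by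
  intro h
  have hXYl : X ⊔ Y = l :=
    eq_of_le_of_finrank_le (sup_le hXl hYl) (by rw [finrank_sup_two hX hY hXY]; omega)
  have hX'Y'l : X' ⊔ Y' = l' :=
    eq_of_le_of_finrank_le (sup_le hX'l' hY'l') (by rw [finrank_sup_two hX' hY' hX'Y']; omega)
  have hlP : l ≤ X ⊔ Y' := by
    rw [← hXYl]
    exact sup_le le_sup_left (h ▸ le_sup_right)
  have hl'P : l' ≤ X ⊔ Y' := by
    rw [← hX'Y'l]
    exact sup_le (h ▸ le_sup_left) le_sup_right
  have h1 : 3 ≤ finrank K ↥(X ⊔ Y') :=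
    le_trans hsup3.ge (finrank_mono (sup_le hlP hl'P))
  have h2 := Submodule.finrank_sup_add_finrank_inf_eq X Y'
  omega

lemma param {l B : Submodule K V3} {u a : V3}
    (hl : finrank K l = 2) (hu : u ≠ 0) (hul : u ∈ l) (hal : a ∈ l)
    (haO : a ∉ span K {u})
    (hB : finrank K B = 1) (hBl : B ≤ l) (hBO : B ≠ span K {u})
    (hBA : B ≠ span K {a}) :
    ∃ β : K, β ≠ 0 ∧ β • u + a ∈ B := by
  have hli : LinearIndependent K ![u, a] :=
    (LinearIndependent.pair_iff' hu).mpr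
      (fun t ht => haO (ht ▸ smul_mem _ t (mem_span_singleton_self u)))
  have hspan : span K {u, a} = l := by
    refine eq_of_le_of_finrank_le ((span_le).mpr ?_) ?_
    · intro x hx; rcases hx with h | h <;> simp_all
    · rw [finrank_span_pair' hli]; omega
  obtain ⟨b₀, hb₀B, hb₀0⟩ : ∃ b₀, b₀ ∈ B ∧ b₀ ≠ 0 := by
    apply Submodule.exists_mem_ne_zero_of_ne_bot
    intro h; rw [h] at hB; simp at hB
  have hb₀l : b₀ ∈ span K {u, a} := hspan ▸ hBl hb₀B
  obtain ⟨s, t, hst⟩ := mem_span_pair.mp hb₀l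
  have ht : t ≠ 0 := by
    intro h
    subst h
    rw [zero_smul, add_zero] at hst
    have : b₀ ∈ span K {u} := hst ▸ smul_mem _ s (mem_span_singleton_self u)
    exact hBO (eq_span_of_mem hB hb₀B hb₀0 ▸ by
      refine eq_of_le_of_finrank_le ((span_le).mpr (by simpa using this)) ?_
      rw [finrank_span_singleton hu, finrank_span_singleton hb₀0])
  have hmem : (t⁻¹ * s) • u + a ∈ B := by
    have : t⁻¹ • b₀ ∈ B := smul_mem _ _ hb₀B
    rw [← hst] at this
    rwa [smul_add, smul_smul, smul_smul, inv_mul_cancel₀ ht, one_smul] at this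
  refine ⟨t⁻¹ * s, ?_, hmem⟩
  intro h
  rw [h, zero_smul, zero_add] at hmem
  exact hBA (eq_span_of_mem hB hmem (fun h0 => haO (h0 ▸ zero_mem _)))

end Helpers

/-- Three points (1-dimensional subspaces) of `ℙ²(K)` are collinear if they are contained in a
common 2-dimensional subspace of `K³`. -/
def Collinear3 {K : Type*} [Field K] (P Q R : Submodule K (Fin 3 → K)) : Prop :=
  ∃ W : Submodule K (Fin 3 → K), Module.finrank K W = 2 ∧ P ≤ W ∧ Q ≤ W ∧ R ≤ W

/-- The Pappus–Pascal theorem in the projective plane `ℙ²(K)` over a field `K`. -/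
theorem pappus_pascal {K : Type*} [Field K]
    (l l' : Submodule K (Fin 3 → K))
    (hl : Module.finrank K l = 2) (hl' : Module.finrank K l' = 2) (hll' : l ≠ l')
    (A B C A' B' C' A'' B'' C'' : Submodule K (Fin 3 → K))
    (hA : Module.finrank K A = 1) (hB : Module.finrank K B = 1)
    (hC : Module.finrank K C = 1) (hA' : Module.finrank K A' = 1)
    (hB' : Module.finrank K B' = 1) (hC' : Module.finrank K C' = 1)
    (hA'' : Module.finrank K A'' = 1) (hB'' : Module.finrank K B'' = 1)
    (hC'' : Module.finrank K C'' = 1)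
    (hAl : A ≤ l) (hBl : B ≤ l) (hCl : C ≤ l)
    (hAB : A ≠ B) (hAC : A ≠ C) (hBC : B ≠ C)
    (hA'l : A' ≤ l') (hB'l : B' ≤ l') (hC'l : C' ≤ l')
    (hA'B' : A' ≠ B') (hA'C' : A' ≠ C') (hB'C' : B' ≠ C')
    (hAi : A ≠ l ⊓ l') (hBi : B ≠ l ⊓ l') (hCi : C ≠ l ⊓ l')
    (hA'i : A' ≠ l ⊓ l') (hB'i : B' ≠ l ⊓ l') (hC'i : C' ≠ l ⊓ l')
    (hC''on : C'' ≤ A ⊔ B' ∧ C'' ≤ A' ⊔ B)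
    (hB''on : B'' ≤ A ⊔ C' ∧ B'' ≤ A' ⊔ C)
    (hA''on : A'' ≤ B ⊔ C' ∧ A'' ≤ B' ⊔ C) :
    Collinear3 A'' B'' C'' := by
  classical
  have h3 : Module.finrank K (Fin 3 → K) = 3 := Module.finrank_fin_fun K
  have hsup3 : Module.finrank K ↥(l ⊔ l') = 3 := by
    have hlt : l < l ⊔ l' := lt_of_le_of_ne le_sup_left (fun h => hll'
      (Submodule.eq_of_le_of_finrank_le (le_sup_right.trans h.ge : l' ≤ l) (by omega)).symm)
    have h1 : 2 < Module.finrank K ↥(l ⊔ l') := hl ▸ Submodule.finrank_lt_finrank_of_lt hlt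
    have h2 : Module.finrank K ↥(l ⊔ l') ≤ 3 := le_trans (Submodule.finrank_le _) h3.le
    omega
  have hO1 : Module.finrank K ↥(l ⊓ l') = 1 := by
    have := Submodule.finrank_sup_add_finrank_inf_eq l l'
    omega
  have hO1' : Module.finrank K ↥(l' ⊓ l) = 1 := by rwa [inf_comm]
  obtain ⟨u, huO, hu0⟩ := Submodule.exists_mem_ne_zero_of_ne_bot
    (p := l ⊓ l') (by intro h; rw [h] at hO1; simp at hO1)
  have hul : u ∈ l := huO.1
  have hul' : u ∈ l' := huO.2
  have hOspan : l ⊓ l' = Submodule.span K {u} := eq_span_of_mem hO1 huO hu0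
  -- generator of A
  obtain ⟨a, haA, ha0⟩ : ∃ a, a ∈ A ∧ a ≠ 0 := by
    apply Submodule.exists_mem_ne_zero_of_ne_bot
    intro h; rw [h] at hA; simp at hA
  have hAspan : A = Submodule.span K {a} := eq_span_of_mem hA haA ha0
  have hal : a ∈ l := hAl haA
  have haO : a ∉ Submodule.span K {u} := by
    intro h
    apply hAi
    rw [hOspan, hAspan]
    exact Submodule.eq_of_le_of_finrank_le (Submodule.span_le.mpr (by simpa using h))
      (by rw [finrank_span_singleton hu0, finrank_span_singleton ha0])
  -- generator of A'
  obtain ⟨a', ha'A', ha'0⟩ : ∃ a', a' ∈ A' ∧ a' ≠ 0 := by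
    apply Submodule.exists_mem_ne_zero_of_ne_bot
    intro h; rw [h] at hA'; simp at hA'
  have hA'span : A' = Submodule.span K {a'} := eq_span_of_mem hA' ha'A' ha'0
  have ha'l' : a' ∈ l' := hA'l ha'A'
  have ha'O : a' ∉ Submodule.span K {u} := by
    intro h
    apply hA'i
    rw [hOspan, hA'span]
    exact Submodule.eq_of_le_of_finrank_le (Submodule.span_le.mpr (by simpa using h))
      (by rw [finrank_span_singleton hu0, finrank_span_singleton ha'0])
  -- independence of u, a, a'
  have hind : ∀ x y z : K, x • u + y • a + z • a' = 0 → x = 0 ∧ y = 0 ∧ z = 0 := by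
    intro x y z hxyz
    have hz : z = 0 := by
      by_contra hz
      have heq : z • a' = -(x • u + y • a) := by linear_combination (norm := module) hxyz
      have h1 : z • a' ∈ l := by
        rw [heq]; exact neg_mem (add_mem (Submodule.smul_mem _ _ hul) (Submodule.smul_mem _ _ hal))
      have h2 : z • a' ∈ l ⊓ l' := Submodule.mem_inf.mpr ⟨h1, Submodule.smul_mem _ _ ha'l'⟩
      rw [hOspan] at h2
      have h4 : a' ∈ Submodule.span K {u} := by
        have h5 := Submodule.smul_mem _ z⁻¹ h2
        rwa [smul_smul, inv_mul_cancel₀ hz, one_smul] at h5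
      exact ha'O h4
    subst hz
    rw [zero_smul, add_zero] at hxyz
    have hy : y = 0 := by
      by_contra hy
      have h4 : a ∈ Submodule.span K {u} := by
        have heq : a = (-(y⁻¹ * x)) • u := by
          have h5 : y • a = -(x • u) := by linear_combination (norm := module) hxyz
          have h6 := congrArg (fun w => y⁻¹ • w) h5
          simp only [smul_smul, inv_mul_cancel₀ hy, one_smul] at h6
          rw [h6]; module
        rw [heq]
        exact Submodule.smul_mem _ _ (Submodule.mem_span_singleton_self u)
      exact haO h4
    subst hy
    rw [zero_smul, add_zero] at hxyz
    rcases smul_eq_zero.mp hxyz with h | h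
    · exact ⟨h, rfl, rfl⟩
    · exact absurd h hu0
  -- parametrize B, C, B', C'
  obtain ⟨β, hβ0, hbB⟩ := param hl hu0 hul hal haO hB hBl
    (by rw [← hOspan]; exact hBi) (by rw [← hAspan]; exact hAB.symm)
  obtain ⟨γ, hγ0, hcC⟩ := param hl hu0 hul hal haO hC hCl
    (by rw [← hOspan]; exact hCi) (by rw [← hAspan]; exact hAC.symm)
  have hB'i2 : B' ≠ Submodule.span K {u} := by
    rw [← hOspan]; exact hB'i
  have hC'i2 : C' ≠ Submodule.span K {u} := by
    rw [← hOspan]; exact hC'i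
  obtain ⟨β', hβ'0, hb'B'⟩ := param hl' hu0 hul' ha'l' ha'O hB' hB'l
    hB'i2 (by rw [← hA'span]; exact hA'B'.symm)
  obtain ⟨γ', hγ'0, hc'C'⟩ := param hl' hu0 hul' ha'l' ha'O hC' hC'l
    hC'i2 (by rw [← hA'span]; exact hA'C'.symm)
  set b : Fin 3 → K := β • u + a with hb
  set c : Fin 3 → K := γ • u + a with hc
  set b' : Fin 3 → K := β' • u + a' with hb'
  set c' : Fin 3 → K := γ' • u + a' with hc'
  have hγβ : γ ≠ β := by
    intro h
    apply hBC
    have hb0 : b ≠ 0 := by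
      intro h0
      have := hind β 1 0 (by rw [hb] at h0; linear_combination (norm := module) h0)
      exact one_ne_zero this.2.1
    have hc0 : c ≠ 0 := by
      intro h0
      have := hind γ 1 0 (by rw [hc] at h0; linear_combination (norm := module) h0)
      exact one_ne_zero this.2.1
    rw [eq_span_of_mem hB hbB hb0, eq_span_of_mem hC hcC hc0, hb, hc, h]
  have hγ'β' : γ' ≠ β' := by
    intro h
    apply hB'C'
    have hb'0 : b' ≠ 0 := by
      intro h0
      have := hind β' 0 1 (by rw [hb'] at h0; linear_combination (norm := module) h0)
      exact one_ne_zero this.2.2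
    have hc'0 : c' ≠ 0 := by
      intro h0
      have := hind γ' 0 1 (by rw [hc'] at h0; linear_combination (norm := module) h0)
      exact one_ne_zero this.2.2
    rw [eq_span_of_mem hB' hb'B' hb'0, eq_span_of_mem hC' hc'C' hc'0, hb', hc', h]
  -- key vectors
  set vC : Fin 3 → K := β' • b + β • a' with hvC
  set vB : Fin 3 → K := γ' • c + γ • a' with hvB
  set vA : Fin 3 → K := vB - vC with hvA
  have hvC_exp : vC = (β * β') • u + β' • a + β • a' := by rw [hvC, hb]; module
  have hvB_exp : vB = (γ * γ') • u + γ' • a + γ • a' := by rw [hvB, hc]; module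
  have hvA_exp : vA = (γ * γ' - β * β') • u + (γ' - β') • a + (γ - β) • a' := by
    rw [hvA, hvB_exp, hvC_exp]; module
  have hvC0 : vC ≠ 0 := by
    intro h0
    rw [hvC_exp] at h0
    exact hβ0 (hind _ _ _ h0).2.2
  have hvB0 : vB ≠ 0 := by
    intro h0
    rw [hvB_exp] at h0
    exact hγ0 (hind _ _ _ h0).2.2
  have hvA0 : vA ≠ 0 := by
    intro h0
    rw [hvA_exp] at h0
    exact hγβ (sub_eq_zero.mp (hind _ _ _ h0).2.2)
  -- memberships in the six lines
  have hvC_P : vC ∈ A ⊔ B' := by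
    have heq : vC = β • b' + β' • a := by rw [hvC, hb, hb']; module
    rw [heq]
    exact add_mem (Submodule.mem_sup_right (Submodule.smul_mem _ _ hb'B'))
      (Submodule.mem_sup_left (Submodule.smul_mem _ _ haA))
  have hvC_Q : vC ∈ A' ⊔ B := by
    rw [hvC]
    exact add_mem (Submodule.mem_sup_right (Submodule.smul_mem _ _ hbB))
      (Submodule.mem_sup_left (Submodule.smul_mem _ _ ha'A'))
  have hvB_P : vB ∈ A ⊔ C' := by
    have heq : vB = γ • c' + γ' • a := by rw [hvB, hc, hc']; module
    rw [heq]
    exact add_mem (Submodule.mem_sup_right (Submodule.smul_mem _ _ hc'C'))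
      (Submodule.mem_sup_left (Submodule.smul_mem _ _ haA))
  have hvB_Q : vB ∈ A' ⊔ C := by
    rw [hvB]
    exact add_mem (Submodule.mem_sup_right (Submodule.smul_mem _ _ hcC))
      (Submodule.mem_sup_left (Submodule.smul_mem _ _ ha'A'))
  have hvA_P : vA ∈ B ⊔ C' := by
    have heq : vA = (γ' - β') • b + (γ - β) • c' := by rw [hvA, hvB, hvC, hb, hc, hc']; module
    rw [heq]
    exact add_mem (Submodule.mem_sup_left (Submodule.smul_mem _ _ hbB))
      (Submodule.mem_sup_right (Submodule.smul_mem _ _ hc'C'))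
  have hvA_Q : vA ∈ B' ⊔ C := by
    have heq : vA = (γ - β) • b' + (γ' - β') • c := by rw [hvA, hvB, hvC, hb, hb', hc]; module
    rw [heq]
    exact add_mem (Submodule.mem_sup_left (Submodule.smul_mem _ _ hb'B'))
      (Submodule.mem_sup_right (Submodule.smul_mem _ _ hcC))
  -- cross distinctness and plane ranks
  have hAB' : A ≠ B' := cross_ne hA hAl hB'l hAi hO1
  have hAC' : A ≠ C' := cross_ne hA hAl hC'l hAi hO1
  have hBC'2 : B ≠ C' := cross_ne hB hBl hC'l hBi hO1
  have hA'B2 : A' ≠ B := cross_ne hA' hA'l hBl (by rwa [inf_comm] at hA'i) hO1'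
  have hA'C2 : A' ≠ C := cross_ne hA' hA'l hCl (by rwa [inf_comm] at hA'i) hO1'
  have hB'C2 : B' ≠ C := cross_ne hB' hB'l hCl (by rwa [inf_comm] at hB'i) hO1'
  -- identify the three intersection points
  have hC''eq : C'' = Submodule.span K {vC} :=
    point_eq (finrank_sup_two hA hB' hAB') (finrank_sup_two hA' hB hA'B2)
      (planes_ne hsup3 hA hB hA' hB' hAl hBl hA'l hB'l hAB hA'B' hl hl')
      hC'' hC''on.1 hC''on.2 hvC0 hvC_P hvC_Q
  have hB''eq : B'' = Submodule.span K {vB} :=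
    point_eq (finrank_sup_two hA hC' hAC') (finrank_sup_two hA' hC hA'C2)
      (planes_ne hsup3 hA hC hA' hC' hAl hCl hA'l hC'l hAC hA'C' hl hl')
      hB'' hB''on.1 hB''on.2 hvB0 hvB_P hvB_Q
  have hA''eq : A'' = Submodule.span K {vA} :=
    point_eq (finrank_sup_two hB hC' hBC'2) (finrank_sup_two hB' hC hB'C2)
      (planes_ne hsup3 hB hC hB' hC' hBl hCl hB'l hC'l hBC hB'C' hl hl')
      hA'' hA''on.1 hA''on.2 hvA0 hvA_P hvA_Q
  -- the common plane
  have hli : LinearIndependent K ![vB, vC] := by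
    rw [LinearIndependent.pair_iff]
    intro s t hst
    rw [hvB_exp, hvC_exp] at hst
    have hexp : (s * (γ * γ') + t * (β * β')) • u + (s * γ' + t * β') • a
        + (s * γ + t * β) • a' = 0 := by linear_combination (norm := module) hst
    obtain ⟨e1, e2, e3⟩ := hind _ _ _ hexp
    have hs : s = 0 := by
      have key : s * γ' * (β - γ) = 0 := by linear_combination β * e2 - e1
      rcases mul_eq_zero.mp key with h | h
      · rcases mul_eq_zero.mp h with h' | h'
        · exact h'
        · exact absurd h' hγ'0
      · exact absurd (sub_eq_zero.mp h) (hγβ.symm)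
    refine ⟨hs, ?_⟩
    rw [hs, zero_mul, zero_add] at e3
    rcases mul_eq_zero.mp e3 with h | h
    · exact h
    · exact absurd h hβ0
  refine ⟨Submodule.span K {vB, vC}, finrank_span_pair' hli, ?_, ?_, ?_⟩
  · rw [hA''eq, Submodule.span_le]
    intro x hx
    rw [Set.mem_singleton_iff] at hx
    subst hx
    rw [hvA]
    exact sub_mem (Submodule.subset_span (by simp)) (Submodule.subset_span (by simp))
  · rw [hB''eq, Submodule.span_le]
    intro x hx
    rw [Set.mem_singleton_iff] at hx
    subst hx
    exact Submodule.subset_span (by simp)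
  · rw [hC''eq, Submodule.span_le]
    intro x hx
    rw [Set.mem_singleton_iff] at hx
    subst hx
    exact Submodule.subset_span (by simp)
end

section
/- (Fundamental theorem of central-axial collineations, existence.) Let K be a field. Let A, B, C, D be points of ℙ²(K) in general position (no three of them collinear) and let A', B', C', D' also be points of ℙ²(K) in general position. Then there exists an element g of PGL(3, K) with g(A) = A', g(B) = B', g(C) = C', g(D) = D', and moreover g can be chosen to be a product of at most four central-axial collineations, i.e., at most four elements of PGL(3, K) each of which fixes every point of some line of ℙ²(K). -/
/-- A central-axial collineation of `ℙ²(K)`: an element of `PGL(3, K)` (represented by a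
matrix in `GL(3, K)`) that fixes every point of some line of `ℙ²(K)`. -/
def IsCentralAxial {K : Type*} [Field K] (g : GL (Fin 3) K) : Prop :=
  ∃ l : Submodule K (Fin 3 → K), Module.finrank K l = 2 ∧
    ∀ P : Submodule K (Fin 3 → K), Module.finrank K P = 1 → P ≤ l →
      Submodule.map (Matrix.mulVecLin (g : Matrix (Fin 3) (Fin 3) K)) P = P

open Module Submodule Matrix

namespace CAC

variable {K : Type*} [Field K]

noncomputable section

lemma finrank_V3 : finrank K (Fin 3 → K) = 3 := by
  simp [Module.finrank_fintype_fun_eq_card]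

def AxialEquiv (f : (Fin 3 → K) ≃ₗ[K] (Fin 3 → K)) : Prop :=
  ∃ W : Submodule K (Fin 3 → K), finrank K W = 2 ∧ ∀ x ∈ W, f x = x

lemma finrank_ker_eq_two (φ : (Fin 3 → K) →ₗ[K] K) {x : Fin 3 → K} (hx : φ x ≠ 0) :
    finrank K (LinearMap.ker φ) = 2 := by
  have hr : LinearMap.range φ = ⊤ := by
    rw [LinearMap.range_eq_top]
    intro c
    refine ⟨(c * (φ x)⁻¹) • x, ?_⟩
    rw [_root_.map_smul, smul_eq_mul]
    field_simp
  have h := LinearMap.finrank_range_add_finrank_ker φ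
  rw [hr, finrank_top, Module.finrank_self, finrank_V3] at h
  omega

lemma exists_functional {x y : Fin 3 → K} (hx : x ≠ 0) (hy : y ≠ 0) :
    ∃ φ : (Fin 3 → K) →ₗ[K] K, φ x ≠ 0 ∧ φ y ≠ 0 := by
  obtain ⟨i, hi⟩ : ∃ i, x i ≠ 0 := by
    by_contra h; push_neg at h; exact hx (funext h)
  obtain ⟨j, hj⟩ : ∃ j, y j ≠ 0 := by
    by_contra h; push_neg at h; exact hy (funext h)
  by_cases h1 : y i ≠ 0
  · exact ⟨LinearMap.proj i, by simpa using hi, by simpa using h1⟩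
  by_cases h2 : x j ≠ 0
  · exact ⟨LinearMap.proj j, by simpa using h2, by simpa using hj⟩
  · push_neg at h1 h2
    refine ⟨(LinearMap.proj i : (Fin 3 → K) →ₗ[K] K) + (LinearMap.proj j : (Fin 3 → K) →ₗ[K] K), ?_, ?_⟩ <;>
      simp [h1, h2, hi, hj]

/-- For nonzero x, y there is an axial linear auto sending x to y. -/
lemma exists_axial_map {x y : Fin 3 → K} (hx : x ≠ 0) (hy : y ≠ 0) :
    ∃ g : (Fin 3 → K) ≃ₗ[K] (Fin 3 → K), AxialEquiv g ∧ g x = y := by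
  obtain ⟨φ, hφx, hφy⟩ := exists_functional hx hy
  set w : Fin 3 → K := y - x with hw
  have hφw : φ w = φ y - φ x := by rw [hw, map_sub]
  set F : (Fin 3 → K) →ₗ[K] (Fin 3 → K) := LinearMap.id + φ.smulRight ((φ x)⁻¹ • w) with hF
  set G : (Fin 3 → K) →ₗ[K] (Fin 3 → K) := LinearMap.id - φ.smulRight ((φ y)⁻¹ • w) with hG
  have hFv : ∀ v, F v = v + ((φ v) * (φ x)⁻¹) • w := by
    intro v; simp [hF, LinearMap.smulRight_apply, smul_smul]
  have hGv : ∀ v, G v = v - ((φ v) * (φ y)⁻¹) • w := by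
    intro v; simp [hG, LinearMap.smulRight_apply, smul_smul]
  have hFG : ∀ v, F (G v) = v := by
    intro v
    rw [hGv, hFv, map_sub, _root_.map_smul, smul_eq_mul, hφw]
    match_scalars <;> field_simp [hφx, hφy] <;> ring
  have hGF : ∀ v, G (F v) = v := by
    intro v
    rw [hFv, hGv, map_add, _root_.map_smul, smul_eq_mul, hφw]
    match_scalars <;> field_simp [hφx, hφy] <;> ring
  refine ⟨LinearEquiv.ofLinear F G (LinearMap.ext hFG) (LinearMap.ext hGF), ?_, ?_⟩
  · refine ⟨LinearMap.ker φ, finrank_ker_eq_two φ hφx, ?_⟩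
    intro z hz
    have : φ z = 0 := hz
    show F z = z
    rw [hFv, this]
    simp
  · show F x = y
    rw [hFv, mul_inv_cancel₀ hφx, one_smul, hw]
    abel



lemma snoc_eq {M : Type*} (a b c : M) : (Fin.snoc ![a, b] c : Fin 3 → M) = ![a, b, c] := by
  funext i
  fin_cases i <;> simp [Fin.snoc] <;> rfl

lemma triple_iff {a b c : Fin 3 → K} :
    LinearIndependent K ![a, b, c] ↔
      LinearIndependent K ![a, b] ∧ c ∉ span K {a, b} := by
  rw [← snoc_eq, linearIndependent_fin_snoc, Matrix.range_cons_cons_empty]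

lemma swap23 {a b c : Fin 3 → K} (h : LinearIndependent K ![a, b, c]) :
    LinearIndependent K ![a, c, b] := by
  have he : ![a, c, b] = ![a, b, c] ∘ (Equiv.swap (1 : Fin 3) 2) := by
    funext i
    fin_cases i <;> simp [Equiv.swap_apply_of_ne_of_ne]
  rw [he, linearIndependent_equiv]
  exact h

lemma combo_indep {a b c : Fin 3 → K} (h : LinearIndependent K ![a, b, c]) :
    LinearIndependent K ![a, b + c, b] := by
  rw [Fintype.linearIndependent_iff]
  intro g hg
  simp only [Fin.sum_univ_three, Matrix.cons_val_zero, Matrix.cons_val_one, Matrix.head_cons,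
    Matrix.cons_val_two, Matrix.tail_cons] at hg
  have hg' : g 0 • a + (g 1 + g 2) • b + (g 1) • c = 0 := by
    rw [← hg]
    module
  have := Fintype.linearIndependent_iff.1 h ![g 0, g 1 + g 2, g 1] (by
    simpa [Fin.sum_univ_three] using hg')
  have h0 := this 0
  have h1 := this 1
  have h2 := this 2
  simp at h0 h1 h2
  intro i
  have h2' : g 2 = 0 := by rw [h2, zero_add] at h1; exact h1
  fin_cases i <;> simp [h0, h2, h2']

lemma indep_single {k : Fin 3 → K} {i j l : Fin 3} (hi : k i ≠ 0) (hij : i ≠ j)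
    (hil : i ≠ l) (hjl : j ≠ l) :
    LinearIndependent K ![k, Pi.single j 1, Pi.single l 1] := by
  rw [Fintype.linearIndependent_iff]
  intro g hg
  simp only [Fin.sum_univ_three, Matrix.cons_val_zero, Matrix.cons_val_one, Matrix.head_cons,
    Matrix.cons_val_two, Matrix.tail_cons] at hg
  have ei := congrFun hg i
  have ej := congrFun hg j
  have el := congrFun hg l
  simp [Pi.single_apply, hij, hil, hjl, Ne.symm hij, Ne.symm hil, Ne.symm hjl] at ei ej el
  have h0 : g 0 = 0 := by
    rcases ei with h | h
    · exact h
    · exact absurd h hi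
  rw [h0] at ej el
  simp at ej el
  intro m
  fin_cases m <;> simp [h0, ej, el]

lemma extend_basis {k : Fin 3 → K} (hk : k ≠ 0) :
    ∃ u v : Fin 3 → K, LinearIndependent K ![k, u, v] := by
  obtain ⟨i, hi⟩ : ∃ i, k i ≠ 0 := by
    by_contra h; push_neg at h; exact hk (funext h)
  refine ⟨Pi.single (if i = 0 then 1 else 0) 1, Pi.single (if i = 2 then 1 else 2) 1,
    indep_single hi ?_ ?_ ?_⟩ <;> fin_cases i <;> decide

lemma span_pair_finrank {a b : Fin 3 → K} (h : LinearIndependent K ![a, b]) :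
    finrank K (span K {a, b}) = 2 := by
  have := finrank_span_eq_card h
  rwa [Matrix.range_cons_cons_empty, Fintype.card_fin] at this


/-- A linear auto fixing a nonzero vector is a composition of two axial autos. -/
lemma exists_two_axial {f : (Fin 3 → K) ≃ₗ[K] (Fin 3 → K)} {k : Fin 3 → K}
    (hk : k ≠ 0) (hfk : f k = k) :
    ∃ P T : (Fin 3 → K) ≃ₗ[K] (Fin 3 → K),
      AxialEquiv P ∧ AxialEquiv T ∧ f = T.trans P := by
  obtain ⟨u, v, hkuv⟩ := extend_basis hk
  -- f u is independent from k
  have hfu_k : ∀ α : K, f u ≠ α • k := by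
    intro α hα
    have : u = α • k := by
      apply f.injective
      rw [hα, _root_.map_smul, hfk]
    have h1 := (triple_iff.1 (swap23 hkuv)).2
    exact h1 (by rw [this]; exact mem_span_pair.2 ⟨α, 0, by simp⟩)
  -- choose z among v, u + v with f u ∉ span {k, z}
  obtain ⟨z, hz1, hz2⟩ :
      ∃ z, LinearIndependent K ![k, z, u] ∧ f u ∉ span K {k, z} := by
    by_cases hcase : f u ∈ span K {k, v}
    · refine ⟨u + v, combo_indep hkuv, ?_⟩
      intro hmem
      obtain ⟨α, β, hαβ⟩ := mem_span_pair.1 hcase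
      obtain ⟨α', β', hαβ'⟩ := mem_span_pair.1 hmem
      have heq : (α - α') • k + (-β') • u + (β - β') • v = 0 := by
        linear_combination (norm := module) hαβ - hαβ'
      have hall := Fintype.linearIndependent_iff.1 hkuv ![α - α', -β', β - β'] (by
        simpa [Fin.sum_univ_three] using heq)
      have e1 := hall 1
      have e2 := hall 2
      simp at e1 e2
      have hβ : β = 0 := by rw [e1] at e2; simpa using e2
      exact hfu_k α (by rw [← hαβ, hβ, zero_smul, add_zero])
    · exact ⟨v, swap23 hkuv, hcase⟩
  have hpair_kz : LinearIndependent K ![k, z] := (triple_iff.1 hz1).1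
  have hz1' : LinearIndependent K ![k, z, f u] := triple_iff.2 ⟨hpair_kz, hz2⟩
  have hcard : Fintype.card (Fin 3) = finrank K (Fin 3 → K) := by simp [finrank_V3]
  set T := (basisOfLinearIndependentOfCardEqFinrank hz1 hcard).equiv
    (basisOfLinearIndependentOfCardEqFinrank hz1' hcard) (Equiv.refl _) with hT
  have key : ∀ i : Fin 3, T (![k, z, u] i) = ![k, z, f u] i := by
    intro i
    have h := (basisOfLinearIndependentOfCardEqFinrank hz1 hcard).equiv_apply (i := i)
      (basisOfLinearIndependentOfCardEqFinrank hz1' hcard) (Equiv.refl _)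
    rwa [coe_basisOfLinearIndependentOfCardEqFinrank,
      coe_basisOfLinearIndependentOfCardEqFinrank, Equiv.refl_apply, ← hT] at h
  have e0 := key 0
  have e1 := key 1
  have e2 := key 2
  simp only [Matrix.cons_val_zero, Matrix.cons_val_one, Matrix.head_cons,
    Matrix.cons_val_two, Matrix.tail_cons] at e0 e1 e2
  -- e0 : T k = k, e1 : T z = z, e2 : T u = f u
  have hTsk : T.symm k = k := by rw [LinearEquiv.symm_apply_eq, e0]
  have hTsu : T.symm (f u) = u := by rw [LinearEquiv.symm_apply_eq, e2]
  refine ⟨T.symm.trans f, T, ?_, ?_, ?_⟩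
  · refine ⟨span K {k, f u}, ?_, ?_⟩
    · exact span_pair_finrank (triple_iff.1 (swap23 hz1')).1
    · intro x hx
      obtain ⟨s, t, rfl⟩ := mem_span_pair.1 hx
      simp only [LinearEquiv.trans_apply, map_add, _root_.map_smul, hTsk, hTsu, hfk]
  · refine ⟨span K {k, z}, span_pair_finrank hpair_kz, ?_⟩
    intro x hx
    obtain ⟨s, t, rfl⟩ := mem_span_pair.1 hx
    simp only [map_add, _root_.map_smul, e0, e1]
  · ext x
    simp [LinearEquiv.trans_apply]

/-- Every linear auto of K³ is a composition of three axial autos. -/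
lemma exists_three_axial (f : (Fin 3 → K) ≃ₗ[K] (Fin 3 → K)) :
    ∃ ρ P T : (Fin 3 → K) ≃ₗ[K] (Fin 3 → K),
      AxialEquiv ρ ∧ AxialEquiv P ∧ AxialEquiv T ∧ f = (T.trans P).trans ρ := by
  have hx : (Pi.single 0 1 : Fin 3 → K) ≠ 0 := by
    intro h
    have := congrFun h 0
    simp at this
  have hy : f (Pi.single 0 1) ≠ 0 := by
    intro h
    exact hx (f.map_eq_zero_iff.1 h)
  obtain ⟨ρ, hρ, hρx⟩ := exists_axial_map hx hy
  have hNx : (f.trans ρ.symm) (Pi.single 0 1) = Pi.single 0 1 := by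
    simp only [LinearEquiv.trans_apply]
    rw [← hρx, LinearEquiv.symm_apply_apply]
  obtain ⟨P, T, hP, hT, hN⟩ := exists_two_axial hx hNx
  refine ⟨ρ, P, T, hρ, hP, hT, ?_⟩
  ext x
  have := congrArg (fun g : (Fin 3 → K) ≃ₗ[K] (Fin 3 → K) => ρ (g x)) hN
  simp only [LinearEquiv.trans_apply] at this ⊢
  rw [← this, LinearEquiv.apply_symm_apply]

/-- Conversion of a linear auto to `GL (Fin 3) K`. -/
def toGL (f : (Fin 3 → K) ≃ₗ[K] (Fin 3 → K)) : GL (Fin 3) K where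
  val := LinearMap.toMatrix' (f : (Fin 3 → K) →ₗ[K] (Fin 3 → K))
  inv := LinearMap.toMatrix' (f.symm : (Fin 3 → K) →ₗ[K] (Fin 3 → K))
  val_inv := by
    rw [← LinearMap.toMatrix'_comp]
    have : (f : (Fin 3 → K) →ₗ[K] (Fin 3 → K)) ∘ₗ (f.symm : (Fin 3 → K) →ₗ[K] (Fin 3 → K))
        = LinearMap.id := by ext v; simp
    rw [this, LinearMap.toMatrix'_id]
  inv_val := by
    rw [← LinearMap.toMatrix'_comp]
    have : (f.symm : (Fin 3 → K) →ₗ[K] (Fin 3 → K)) ∘ₗ (f : (Fin 3 → K) →ₗ[K] (Fin 3 → K))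
        = LinearMap.id := by ext v; simp
    rw [this, LinearMap.toMatrix'_id]

lemma mulVecLin_toGL (f : (Fin 3 → K) ≃ₗ[K] (Fin 3 → K)) :
    Matrix.mulVecLin ((toGL f : GL (Fin 3) K) : Matrix (Fin 3) (Fin 3) K)
      = (f : (Fin 3 → K) →ₗ[K] (Fin 3 → K)) := by
  have h := Matrix.toLin'_toMatrix' (f : (Fin 3 → K) →ₗ[K] (Fin 3 → K))
  rw [← h]
  rfl

lemma isCentralAxial_toGL {f : (Fin 3 → K) ≃ₗ[K] (Fin 3 → K)} (h : AxialEquiv f) :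
    IsCentralAxial (toGL f) := by
  obtain ⟨W, hW2, hfix⟩ := h
  refine ⟨W, hW2, ?_⟩
  intro P _ hPW
  rw [mulVecLin_toGL]
  apply le_antisymm
  · rintro x ⟨y, hy, rfl⟩
    simpa [hfix y (hPW hy)] using hy
  · intro x hx
    exact ⟨x, hx, hfix x (hPW hx)⟩

lemma gen_of_rank_one {A : Submodule K (Fin 3 → K)} (h : finrank K A = 1) :
    ∃ v : Fin 3 → K, v ≠ 0 ∧ A = span K {v} := by
  have hbot : A ≠ ⊥ := by
    intro h'
    rw [h', finrank_bot] at h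
    omega
  obtain ⟨v, hvA, hv0⟩ := Submodule.exists_mem_ne_zero_of_ne_bot hbot
  refine ⟨v, hv0, ?_⟩
  refine (Submodule.eq_of_le_of_finrank_eq ?_ ?_).symm
  · rwa [span_le, Set.singleton_subset_iff]
  · rw [finrank_span_singleton hv0, h]

lemma exists_grow (U : Submodule K (Fin 3 → K)) (hU : finrank K U < 3) :
    ∃ U' : Submodule K (Fin 3 → K), U ≤ U' ∧ finrank K U' = finrank K U + 1 := by
  have hne : U ≠ ⊤ := by
    intro h
    rw [h, finrank_top, finrank_V3] at hU
    omega
  obtain ⟨v, -, hv⟩ := SetLike.exists_of_lt (show U < (⊤ : Submodule K (Fin 3 → K)) from Ne.lt_top hne)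
  have hv0 : v ≠ 0 := by rintro rfl; exact hv (zero_mem U)
  refine ⟨U ⊔ span K {v}, le_sup_left, ?_⟩
  have hinf : U ⊓ span K {v} = ⊥ := by
    rw [eq_bot_iff]
    intro x hx
    obtain ⟨hxU, hxv⟩ := Submodule.mem_inf.1 hx
    obtain ⟨c, rfl⟩ := Submodule.mem_span_singleton.1 hxv
    rcases eq_or_ne c 0 with rfl | hc
    · simp
    · exact absurd (by simpa [smul_smul, inv_mul_cancel₀ hc] using U.smul_mem c⁻¹ hxU) hv
  have := Submodule.finrank_sup_add_finrank_inf_eq U (span K {v})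
  rw [hinf, finrank_bot, finrank_span_singleton hv0] at this
  omega

lemma exists_plane (U : Submodule K (Fin 3 → K)) (hU : finrank K U ≤ 2) :
    ∃ W : Submodule K (Fin 3 → K), finrank K W = 2 ∧ U ≤ W := by
  rcases eq_or_lt_of_le hU with h | h
  · exact ⟨U, h, le_rfl⟩
  · obtain ⟨U', hUU', hU'⟩ := exists_grow U (by omega)
    rcases eq_or_lt_of_le (show finrank K U' ≤ 2 by omega) with h' | h'
    · exact ⟨U', h', hUU'⟩
    · obtain ⟨U'', hU'U'', hU''⟩ := exists_grow U' (by omega)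
      exact ⟨U'', by omega, hUU'.trans hU'U''⟩

lemma collinear_of_mem {a b c : Fin 3 → K} (h : c ∈ span K {a, b}) :
    Collinear3 (span K {a}) (span K {b}) (span K {c}) := by
  have hsing : ∀ x : Fin 3 → K, finrank K (span K {x}) ≤ 1 := by
    intro x
    rcases eq_or_ne x 0 with rfl | hx
    · rw [Submodule.span_zero_singleton, finrank_bot]
      omega
    · rw [finrank_span_singleton hx]
  have hle : finrank K ((span K {a} ⊔ span K {b} : Submodule K (Fin 3 → K))) ≤ 2 := by
    have h1 := Submodule.finrank_sup_add_finrank_inf_eq (span K {a}) (span K {b})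
    have ha := hsing a
    have hb := hsing b
    omega
  obtain ⟨W, hW2, hW⟩ := exists_plane _ hle
  refine ⟨W, hW2, le_sup_left.trans hW, le_sup_right.trans hW, ?_⟩
  rw [span_le, Set.singleton_subset_iff]
  apply hW
  rwa [span_insert] at h

lemma indep_of_not_collinear {a b c : Fin 3 → K}
    (h : ¬ Collinear3 (span K {a}) (span K {b}) (span K {c})) :
    LinearIndependent K ![a, b, c] := by
  by_contra hdep
  obtain ⟨g, hg, i, hgi⟩ := Fintype.not_linearIndependent_iff.1 hdep
  simp only [Fin.sum_univ_three, Matrix.cons_val_zero, Matrix.cons_val_one, Matrix.head_cons,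
    Matrix.cons_val_two, Matrix.tail_cons] at hg
  apply h
  fin_cases i
  · have hmem : a ∈ span K {b, c} := mem_span_pair.2 ⟨-(g 0)⁻¹ * g 1, -(g 0)⁻¹ * g 2, by
      have hg0 : g 0 ≠ 0 := by simpa using hgi
      have h3 : g 0 • a = -(g 1 • b) - g 2 • c := by
        linear_combination (norm := module) hg
      have h1 : a = (g 0)⁻¹ • (g 0 • a) := by
        rw [smul_smul, inv_mul_cancel₀ hg0, one_smul]
      rw [h1, h3]
      match_scalars <;> ring⟩
    obtain ⟨W, hW2, h1, h2, h3⟩ := collinear_of_mem hmem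
    exact ⟨W, hW2, h3, h1, h2⟩
  · have hmem : b ∈ span K {a, c} := mem_span_pair.2 ⟨-(g 1)⁻¹ * g 0, -(g 1)⁻¹ * g 2, by
      have hg0 : g 1 ≠ 0 := by simpa using hgi
      have h3 : g 1 • b = -(g 0 • a) - g 2 • c := by
        linear_combination (norm := module) hg
      have h1 : b = (g 1)⁻¹ • (g 1 • b) := by
        rw [smul_smul, inv_mul_cancel₀ hg0, one_smul]
      rw [h1, h3]
      match_scalars <;> ring⟩
    obtain ⟨W, hW2, h1, h2, h3⟩ := collinear_of_mem hmem
    exact ⟨W, hW2, h1, h3, h2⟩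
  · have hmem : c ∈ span K {a, b} := mem_span_pair.2 ⟨-(g 2)⁻¹ * g 0, -(g 2)⁻¹ * g 1, by
      have hg0 : g 2 ≠ 0 := by simpa using hgi
      have h3 : g 2 • c = -(g 0 • a) - g 1 • b := by
        linear_combination (norm := module) hg
      have h1 : c = (g 2)⁻¹ • (g 2 • c) := by
        rw [smul_smul, inv_mul_cancel₀ hg0, one_smul]
      rw [h1, h3]
      match_scalars <;> ring⟩
    exact collinear_of_mem hmem

lemma exists_coeffs {a b c : Fin 3 → K} (hli : LinearIndependent K ![a, b, c])
    (d : Fin 3 → K) :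
    ∃ t : Fin 3 → K, d = t 0 • a + t 1 • b + t 2 • c := by
  have hcard : Fintype.card (Fin 3) = finrank K (Fin 3 → K) := by simp [finrank_V3]
  set bb := basisOfLinearIndependentOfCardEqFinrank hli hcard with hbb
  refine ⟨fun i => bb.repr d i, ?_⟩
  have h := (bb.sum_repr d).symm
  rw [Fin.sum_univ_three] at h
  have hco : ∀ i : Fin 3, bb i = ![a, b, c] i := by
    intro i
    rw [hbb, coe_basisOfLinearIndependentOfCardEqFinrank]
  rw [hco 0, hco 1, hco 2] at h
  simpa using h

lemma isCentralAxial_one : IsCentralAxial (1 : GL (Fin 3) K) := by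
  refine ⟨LinearMap.ker (LinearMap.proj 2), finrank_ker_eq_two _ (x := Pi.single 2 1) ?_, ?_⟩
  · simp
  · intro P _ _
    have : ((1 : GL (Fin 3) K) : Matrix (Fin 3) (Fin 3) K) = 1 := rfl
    rw [this, Matrix.mulVecLin_one, Submodule.map_id]

lemma scaled_indep {a b c : Fin 3 → K} (hli : LinearIndependent K ![a, b, c])
    {t : Fin 3 → K} (h0 : t 0 ≠ 0) (h1 : t 1 ≠ 0) (h2 : t 2 ≠ 0) :
    LinearIndependent K ![t 0 • a, t 1 • b, t 2 • c] := by
  have := hli.units_smul ![Units.mk0 (t 0) h0, Units.mk0 (t 1) h1, Units.mk0 (t 2) h2]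
  convert this using 1
  funext i
  fin_cases i <;> simp [Pi.smul_apply', Units.smul_def]

lemma map_span_singleton (f : (Fin 3 → K) ≃ₗ[K] (Fin 3 → K)) (v : Fin 3 → K) :
    Submodule.map (f : (Fin 3 → K) →ₗ[K] (Fin 3 → K)) (span K {v}) = span K {f v} := by
  rw [Submodule.map_span, Set.image_singleton]
  rfl

end

end CAC

open Module Submodule CAC in
/-- Fundamental theorem of central-axial collineations, existence: given two quadruples of
points of `ℙ²(K)` in general position, there is an element of `PGL(3, K)` carrying the first
quadruple to the second, and it may be chosen (up to a scalar) to be a product of (at most)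
four central-axial collineations. -/
theorem exists_pgl_of_four_points {K : Type*} [Field K]
    (A B C D A' B' C' D' : Submodule K (Fin 3 → K))
    (hA : Module.finrank K A = 1) (hB : Module.finrank K B = 1)
    (hC : Module.finrank K C = 1) (hD : Module.finrank K D = 1)
    (hA' : Module.finrank K A' = 1) (hB' : Module.finrank K B' = 1)
    (hC' : Module.finrank K C' = 1) (hD' : Module.finrank K D' = 1)
    (hgen : ¬ Collinear3 A B C ∧ ¬ Collinear3 A B D ∧ ¬ Collinear3 A C D ∧ ¬ Collinear3 B C D)
    (hgen' : ¬ Collinear3 A' B' C' ∧ ¬ Collinear3 A' B' D' ∧ ¬ Collinear3 A' C' D' ∧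
      ¬ Collinear3 B' C' D') :
    ∃ g : GL (Fin 3) K,
      Submodule.map (Matrix.mulVecLin (g : Matrix (Fin 3) (Fin 3) K)) A = A' ∧
      Submodule.map (Matrix.mulVecLin (g : Matrix (Fin 3) (Fin 3) K)) B = B' ∧
      Submodule.map (Matrix.mulVecLin (g : Matrix (Fin 3) (Fin 3) K)) C = C' ∧
      Submodule.map (Matrix.mulVecLin (g : Matrix (Fin 3) (Fin 3) K)) D = D' ∧
      ∃ g₁ g₂ g₃ g₄ : GL (Fin 3) K,
        IsCentralAxial g₁ ∧ IsCentralAxial g₂ ∧ IsCentralAxial g₃ ∧ IsCentralAxial g₄ ∧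
        ∃ c : Kˣ, (g : Matrix (Fin 3) (Fin 3) K) =
          (c : K) • ((g₁ * g₂ * g₃ * g₄ : GL (Fin 3) K) : Matrix (Fin 3) (Fin 3) K) := by
  obtain ⟨hABC, hABD, hACD, hBCD⟩ := hgen
  obtain ⟨hABC', hABD', hACD', hBCD'⟩ := hgen'
  obtain ⟨a, ha0, hAa⟩ := gen_of_rank_one hA
  obtain ⟨b, hb0, hBb⟩ := gen_of_rank_one hB
  obtain ⟨c, hc0, hCc⟩ := gen_of_rank_one hC
  obtain ⟨d, hd0, hDd⟩ := gen_of_rank_one hD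
  obtain ⟨a', ha0', hAa'⟩ := gen_of_rank_one hA'
  obtain ⟨b', hb0', hBb'⟩ := gen_of_rank_one hB'
  obtain ⟨c', hc0', hCc'⟩ := gen_of_rank_one hC'
  obtain ⟨d', hd0', hDd'⟩ := gen_of_rank_one hD'
  subst hAa hBb hCc hDd hAa' hBb' hCc' hDd'
  have hli : LinearIndependent K ![a, b, c] := indep_of_not_collinear hABC
  have hli' : LinearIndependent K ![a', b', c'] := indep_of_not_collinear hABC'
  obtain ⟨t, ht⟩ := exists_coeffs hli d
  obtain ⟨s, hs⟩ := exists_coeffs hli' d'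
  have ht0 : t 0 ≠ 0 := by
    intro h
    exact hBCD (collinear_of_mem (mem_span_pair.2 ⟨t 1, t 2, by rw [ht, h]; module⟩))
  have ht1 : t 1 ≠ 0 := by
    intro h
    exact hACD (collinear_of_mem (mem_span_pair.2 ⟨t 0, t 2, by rw [ht, h]; module⟩))
  have ht2 : t 2 ≠ 0 := by
    intro h
    exact hABD (collinear_of_mem (mem_span_pair.2 ⟨t 0, t 1, by rw [ht, h]; module⟩))
  have hs0 : s 0 ≠ 0 := by
    intro h
    exact hBCD' (collinear_of_mem (mem_span_pair.2 ⟨s 1, s 2, by rw [hs, h]; module⟩))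
  have hs1 : s 1 ≠ 0 := by
    intro h
    exact hACD' (collinear_of_mem (mem_span_pair.2 ⟨s 0, s 2, by rw [hs, h]; module⟩))
  have hs2 : s 2 ≠ 0 := by
    intro h
    exact hABD' (collinear_of_mem (mem_span_pair.2 ⟨s 0, s 1, by rw [hs, h]; module⟩))
  have hsc := scaled_indep hli ht0 ht1 ht2
  have hsc' := scaled_indep hli' hs0 hs1 hs2
  have hcard : Fintype.card (Fin 3) = finrank K (Fin 3 → K) := by simp [finrank_V3]
  set f := (basisOfLinearIndependentOfCardEqFinrank hsc hcard).equiv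
    (basisOfLinearIndependentOfCardEqFinrank hsc' hcard) (Equiv.refl _) with hf_def
  have key : ∀ i : Fin 3,
      f (![t 0 • a, t 1 • b, t 2 • c] i) = ![s 0 • a', s 1 • b', s 2 • c'] i := by
    intro i
    have h := (basisOfLinearIndependentOfCardEqFinrank hsc hcard).equiv_apply (i := i)
      (basisOfLinearIndependentOfCardEqFinrank hsc' hcard) (Equiv.refl _)
    rwa [coe_basisOfLinearIndependentOfCardEqFinrank,
      coe_basisOfLinearIndependentOfCardEqFinrank, Equiv.refl_apply, ← hf_def] at h
  have k0 := key 0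
  have k1 := key 1
  have k2 := key 2
  simp only [Matrix.cons_val_zero, Matrix.cons_val_one, Matrix.head_cons,
    Matrix.cons_val_two, Matrix.tail_cons] at k0 k1 k2
  have hfa : f a = ((t 0)⁻¹ * s 0) • a' := by
    have h' : a = (t 0)⁻¹ • (t 0 • a) := by rw [smul_smul, inv_mul_cancel₀ ht0, one_smul]
    rw [h', _root_.map_smul, k0, smul_smul]
  have hfb : f b = ((t 1)⁻¹ * s 1) • b' := by
    have h' : b = (t 1)⁻¹ • (t 1 • b) := by rw [smul_smul, inv_mul_cancel₀ ht1, one_smul]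
    rw [h', _root_.map_smul, k1, smul_smul]
  have hfc : f c = ((t 2)⁻¹ * s 2) • c' := by
    have h' : c = (t 2)⁻¹ • (t 2 • c) := by rw [smul_smul, inv_mul_cancel₀ ht2, one_smul]
    rw [h', _root_.map_smul, k2, smul_smul]
  have hfd : f d = d' := by
    rw [ht, map_add, map_add, k0, k1, k2, hs]
  obtain ⟨ρ, P, T, hρ, hP, hT, hf⟩ := exists_three_axial f
  refine ⟨toGL f, ?_, ?_, ?_, ?_, toGL ρ, toGL P, toGL T, 1,
    isCentralAxial_toGL hρ, isCentralAxial_toGL hP, isCentralAxial_toGL hT,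
    isCentralAxial_one, 1, ?_⟩
  · rw [mulVecLin_toGL, map_span_singleton, hfa]
    exact span_singleton_smul_eq ((mul_ne_zero (inv_ne_zero ht0) hs0).isUnit) a'
  · rw [mulVecLin_toGL, map_span_singleton, hfb]
    exact span_singleton_smul_eq ((mul_ne_zero (inv_ne_zero ht1) hs1).isUnit) b'
  · rw [mulVecLin_toGL, map_span_singleton, hfc]
    exact span_singleton_smul_eq ((mul_ne_zero (inv_ne_zero ht2) hs2).isUnit) c'
  · rw [mulVecLin_toGL, map_span_singleton, hfd]
  · have hval : ∀ h : (Fin 3 → K) ≃ₗ[K] (Fin 3 → K),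
        ((toGL h : GL (Fin 3) K) : Matrix (Fin 3) (Fin 3) K)
          = LinearMap.toMatrix' (h : (Fin 3 → K) →ₗ[K] (Fin 3 → K)) := fun _ => rfl
    rw [Units.val_one, one_smul, mul_one, Units.val_mul, Units.val_mul,
      hval, hval, hval, hval, hf]
    rw [← LinearMap.toMatrix'_comp, ← LinearMap.toMatrix'_comp]
    congr 1
end
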